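/- arXiv:1709.05960 — 7 statements merged into one kernel-verified Lean document; each statement's English description precedes it below -/
import Mathlib

section
/- For all z in the open interval (0, π), z·(2 + cos z) − 3·sin z > 0. -/
open Real

theorem stmt_0 : ∀ z ∈ Set.Ioo (0 : ℝ) π, z * (2 + Real.cos z) - 3 * Real.sin z > 0 := by
  have key : StrictMonoOn (fun z : ℝ => z * (2 + Real.cos z) - 3 * Real.sin z)
      (Set.Icc 0 π) := by
    apply strictMonoOn_of_deriv_pos (convex_Icc 0 π)
    · fun_prop
    · intro z hz
      rw [interior_Icc] at hz
      have hd : HasDerivAt (fun z : ℝ => z * (2 + Real.cos z) - 3 * Real.sin z)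
          ((1 * (2 + Real.cos z) + z * (0 + -Real.sin z)) - 3 * Real.cos z) z := by
        have h1 : HasDerivAt (fun z : ℝ => z * (2 + Real.cos z))
            (1 * (2 + Real.cos z) + z * (0 + -Real.sin z)) z :=
          (hasDerivAt_id z).mul ((hasDerivAt_const z 2).add (Real.hasDerivAt_cos z))
        exact h1.sub ((Real.hasDerivAt_sin z).const_mul 3)
      rw [hd.deriv]
      -- show 2 - 2 cos z - z sin z > 0 via half angle
      set s := Real.sin (z / 2)
      set c := Real.cos (z / 2)
      have hz2 : z / 2 ∈ Set.Ioo 0 (π / 2) := ⟨by linarith [hz.1], by linarith [hz.2]⟩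
      have hs : 0 < s := Real.sin_pos_of_pos_of_lt_pi hz2.1 (by linarith [hz.2, Real.pi_pos] : z / 2 < π)
      have hc : 0 < c := Real.cos_pos_of_mem_Ioo ⟨by linarith [hz2.1, Real.pi_pos], hz2.2⟩
      have htan : z / 2 < Real.tan (z / 2) := Real.lt_tan hz2.1 hz2.2
      rw [Real.tan_eq_sin_div_cos] at htan
      have hzc : z * c < 2 * s := by
        have h := (div_lt_div_iff₀ (by norm_num : (0:ℝ) < 2) hc).mp htan
        linarith
      have hcos : Real.cos z = 1 - 2 * s ^ 2 := by
        have := Real.cos_sq (z / 2)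
        rw [show 2 * (z / 2) = z by ring] at this
        have h2 := Real.sin_sq_add_cos_sq (z / 2)
        nlinarith
      have hsin : Real.sin z = 2 * s * c := by
        have := Real.sin_two_mul (z / 2)
        rw [show 2 * (z / 2) = z by ring] at this
        linarith
      rw [hcos, hsin]
      nlinarith
  intro z hz
  have h0 : (fun z : ℝ => z * (2 + Real.cos z) - 3 * Real.sin z) 0 <
      (fun z : ℝ => z * (2 + Real.cos z) - 3 * Real.sin z) z :=
    key ⟨le_refl 0, Real.pi_pos.le⟩ ⟨hz.1.le, hz.2.le⟩ hz.1
  simpa using h0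
end

section
/- The function g(x) := 1/(cos(x^{-1/2}) − 1) is concave on the interval (π^{-2}, ∞). -/
/-!
Write `t = x^{-1/2}`, which decreases from `π` to `0` on `(π⁻², ∞)`. By the chain rule
`g'(x) = -t³ sin t / (2 (cos t - 1)²)`, so `g'` is antitone as soon as this expression is
monotone in `t ∈ (0, π)`. Its `t`-derivative is `t² (t cos t + 2t - 3 sin t) / (2 (cos t - 1)²)`
and `3 sin t ≤ t cos t + 2t` on `[0, π]` follows by differentiating three times.
-/

open Real Set

lemma le_of_hasDerivAt_nonneg_of_mem_Icc {f f' : ℝ → ℝ} {a b t : ℝ}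
    (hf : ∀ s, HasDerivAt f (f' s) s) (hf' : ∀ s ∈ Ioo a b, 0 ≤ f' s) (ht : t ∈ Icc a b) :
    f a ≤ f t := by
  have hmono : MonotoneOn f (Icc a b) :=
    monotoneOn_of_hasDerivWithinAt_nonneg (convex_Icc a b)
      (fun s _ => (hf s).continuousAt.continuousWithinAt)
      (fun s _ => (hf s).hasDerivWithinAt) (by simpa only [interior_Icc] using hf')
  exact hmono (left_mem_Icc.2 (ht.1.trans ht.2)) ht ht.1

namespace Real

lemma sin_sub_mul_cos_nonneg {t : ℝ} (ht : t ∈ Icc 0 π) : 0 ≤ sin t - t * cos t := by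
  have hderiv (s : ℝ) : HasDerivAt (fun u => sin u - u * cos u) (s * sin s) s := by
    refine ((hasDerivAt_sin s).sub ((hasDerivAt_id' s).mul (hasDerivAt_cos s))).congr_deriv ?_
    ring
  simpa using le_of_hasDerivAt_nonneg_of_mem_Icc hderiv
    (fun s hs => mul_nonneg hs.1.le (sin_nonneg_of_nonneg_of_le_pi hs.1.le hs.2.le)) ht

lemma mul_sin_le_two_sub_two_mul_cos {t : ℝ} (ht : t ∈ Icc 0 π) :
    t * sin t ≤ 2 - 2 * cos t := by
  have hderiv (s : ℝ) :
      HasDerivAt (fun u => 2 - 2 * cos u - u * sin u) (sin s - s * cos s) s := by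
    refine ((((hasDerivAt_cos s).const_mul 2).const_sub 2).sub
      ((hasDerivAt_id' s).mul (hasDerivAt_sin s))).congr_deriv ?_
    ring
  have := le_of_hasDerivAt_nonneg_of_mem_Icc hderiv
    (fun s hs => sin_sub_mul_cos_nonneg (Ioo_subset_Icc_self hs)) ht
  simp only [cos_zero, sin_zero] at this
  linarith

lemma three_mul_sin_le {t : ℝ} (ht : t ∈ Icc 0 π) : 3 * sin t ≤ t * cos t + 2 * t := by
  have hderiv (s : ℝ) :
      HasDerivAt (fun u => u * cos u + 2 * u - 3 * sin u) (2 - 2 * cos s - s * sin s) s := by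
    refine ((((hasDerivAt_id' s).mul (hasDerivAt_cos s)).add
      ((hasDerivAt_id' s).const_mul 2)).sub ((hasDerivAt_sin s).const_mul 3)).congr_deriv ?_
    ring
  have := le_of_hasDerivAt_nonneg_of_mem_Icc hderiv
    (fun s hs => sub_nonneg.2 (mul_sin_le_two_sub_two_mul_cos (Ioo_subset_Icc_self hs))) ht
  simp only [cos_zero, sin_zero] at this
  linarith

lemma cos_sub_one_ne_zero_of_mem_Ioo {t : ℝ} (ht : t ∈ Ioo 0 π) : cos t - 1 ≠ 0 := by
  have := cos_lt_cos_of_nonneg_of_le_pi le_rfl ht.2.le ht.1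
  rw [cos_zero] at this
  linarith

lemma hasDerivAt_one_div_cos_sub_one {t : ℝ} (ht : cos t - 1 ≠ 0) :
    HasDerivAt (fun u => 1 / (cos u - 1)) (sin t / (cos t - 1) ^ 2) t := by
  simp only [one_div]
  exact (((hasDerivAt_cos t).sub_const 1).inv ht).congr_deriv (by ring)

lemma hasDerivAt_rpow_neg_half {x : ℝ} (hx : 0 < x) :
    HasDerivAt (fun y => y ^ (-(1 : ℝ) / 2)) (-(x ^ (-(1 : ℝ) / 2)) ^ 3 / 2) x := by
  refine (hasDerivAt_rpow_const (p := -(1 : ℝ) / 2) (Or.inl hx.ne')).congr_deriv ?_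
  rw [← rpow_natCast, ← rpow_mul hx.le]
  ring_nf

end Real

noncomputable def derivProfile (t : ℝ) : ℝ := -(t ^ 3 * sin t) / (2 * (cos t - 1) ^ 2)

lemma hasDerivAt_derivProfile {t : ℝ} (ht : cos t - 1 ≠ 0) :
    HasDerivAt derivProfile
      (t ^ 2 * (t * cos t + 2 * t - 3 * sin t) / (2 * (cos t - 1) ^ 2)) t := by
  have hnum : HasDerivAt (fun u => -(u ^ 3 * sin u)) (-(3 * t ^ 2 * sin t + t ^ 3 * cos t)) t :=
    ((hasDerivAt_pow 3 t).mul (hasDerivAt_sin t)).neg.congr_deriv (by ring)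
  have hden : HasDerivAt (fun u => 2 * (cos u - 1) ^ 2) (-(4 * (cos t - 1) * sin t)) t :=
    ((((hasDerivAt_cos t).sub_const 1).pow 2).const_mul 2).congr_deriv (by ring)
  refine (hnum.div hden (by positivity)).congr_deriv ?_
  field_simp
  linear_combination (-4 * t ^ 3) * sin_sq_add_cos_sq t

lemma monotoneOn_derivProfile : MonotoneOn derivProfile (Ioo 0 π) := by
  have hderiv : ∀ t ∈ Ioo 0 π, HasDerivAt derivProfile _ t :=
    fun t ht => hasDerivAt_derivProfile (cos_sub_one_ne_zero_of_mem_Ioo ht)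
  refine monotoneOn_of_hasDerivWithinAt_nonneg (convex_Ioo 0 π)
    (fun t ht => (hderiv t ht).continuousAt.continuousWithinAt)
    (fun t ht => (hderiv t (interior_subset ht)).hasDerivWithinAt) fun t ht => ?_
  rw [interior_Ioo] at ht
  have := three_mul_sin_le (Ioo_subset_Icc_self ht)
  exact div_nonneg (mul_nonneg (sq_nonneg t) (by linarith)) (by positivity)

lemma rpow_neg_half_mem_Ioo {x : ℝ} (hx : x ∈ Ioi (π ^ 2)⁻¹) :
    x ^ (-(1 : ℝ) / 2) ∈ Ioo 0 π := by
  have hπ : (π ^ 2)⁻¹ = π ^ (-2 : ℝ) := by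
    rw [rpow_neg pi_pos.le, rpow_two]
  have hx0 : 0 < x := lt_trans (by positivity) hx
  refine ⟨rpow_pos_of_pos hx0 _, ?_⟩
  calc x ^ (-(1 : ℝ) / 2) < ((π ^ 2)⁻¹) ^ (-(1 : ℝ) / 2) :=
        rpow_lt_rpow_of_neg (by positivity) hx (by norm_num)
    _ = π := by rw [hπ, ← rpow_mul pi_pos.le]; norm_num

lemma hasDerivAt_one_div_cos_rpow_neg_half_sub_one {x : ℝ} (hx : 0 < x)
    (hc : cos (x ^ (-(1 : ℝ) / 2)) - 1 ≠ 0) :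
    HasDerivAt (fun y => 1 / (cos (y ^ (-(1 : ℝ) / 2)) - 1))
      (derivProfile (x ^ (-(1 : ℝ) / 2))) x := by
  refine ((hasDerivAt_one_div_cos_sub_one hc).comp x (hasDerivAt_rpow_neg_half hx)).congr_deriv ?_
  unfold derivProfile
  field_simp

theorem stmt_3 :
    ConcaveOn ℝ (Set.Ioi ((π : ℝ) ^ 2)⁻¹)
      (fun x : ℝ => 1 / (Real.cos (x ^ (-(1 : ℝ) / 2)) - 1)) := by
  have hpos : ∀ x ∈ Ioi (π ^ 2)⁻¹, 0 < x := fun x hx => lt_trans (by positivity) hx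
  have hderiv : ∀ x ∈ Ioi (π ^ 2)⁻¹,
      HasDerivAt (fun y => 1 / (cos (y ^ (-(1 : ℝ) / 2)) - 1))
        (derivProfile (x ^ (-(1 : ℝ) / 2))) x := fun x hx =>
    hasDerivAt_one_div_cos_rpow_neg_half_sub_one (hpos x hx)
      (cos_sub_one_ne_zero_of_mem_Ioo (rpow_neg_half_mem_Ioo hx))
  refine AntitoneOn.concaveOn_of_deriv (convex_Ioi _)
    (fun x hx => (hderiv x hx).continuousAt.continuousWithinAt)
    (fun x hx => (hderiv x (interior_subset hx)).differentiableAt.differentiableWithinAt) ?_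
  rw [interior_Ioi]
  intro x hx y hy hxy
  rw [(hderiv x hx).deriv, (hderiv y hy).deriv]
  exact monotoneOn_derivProfile (rpow_neg_half_mem_Ioo hy) (rpow_neg_half_mem_Ioo hx)
    (rpow_le_rpow_of_nonpos (hpos x hx) hxy (by norm_num))
end

section
/- The function T₂(x) := −2π·(x − π + sin x)/(π − x)³ satisfies T₂''(x) ≤ 0 for all x ∈ (0, π). -/
open Real

/-!
With `u = π - x`, `T₂''(x) = -2π ((12 - u²) sin u - 6u (1 + cos u)) / u⁵`, so the claim is
`6u (1 + cos u) ≤ (12 - u²) sin u` on `[0, π]`. Writing `u = 2s`, this is `cos s` times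
`s cos s ≤ (1 - s²/3) sin s`, whose two sides agree at `0` and whose difference has derivative
`(s/3) (sin s - s cos s) ≥ 0` on `[0, π]`.
-/

theorem mul_cos_le_sin {s : ℝ} (hs₀ : 0 ≤ s) (hsπ : s ≤ π) : s * cos s ≤ sin s := by
  rcases lt_or_ge s (π / 2) with hs | hs
  · have hcos : 0 < cos s := cos_pos_of_mem_Ioo ⟨by linarith [pi_pos], hs⟩
    have := mul_le_mul_of_nonneg_right (le_tan hs₀ hs) hcos.le
    rwa [tan_eq_sin_div_cos, div_mul_cancel₀ _ hcos.ne'] at this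
  · have hcos : cos s ≤ 0 := cos_nonpos_of_pi_div_two_le_of_le hs (by linarith [pi_pos])
    nlinarith [sin_nonneg_of_nonneg_of_le_pi hs₀ hsπ]

theorem mul_cos_le_one_sub_sq_div_three_mul_sin {s : ℝ} (hs₀ : 0 ≤ s) (hsπ : s ≤ π) :
    s * cos s ≤ (1 - s ^ 2 / 3) * sin s := by
  let g : ℝ → ℝ := fun s ↦ (1 - s ^ 2 / 3) * sin s - s * cos s
  have hg : ∀ t, HasDerivAt g (t / 3 * (sin t - t * cos t)) t := fun t ↦ by
    refine ((((hasDerivAt_pow 2 t).div_const 3).const_sub 1 |>.mul (hasDerivAt_sin t)).sub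
      ((hasDerivAt_id t).mul (hasDerivAt_cos t))).congr_deriv ?_
    simp only [id_eq]
    ring
  have hmono : MonotoneOn g (Set.Icc 0 π) := by
    refine monotoneOn_of_hasDerivWithinAt_nonneg (convex_Icc 0 π)
      (fun t _ ↦ (hg t).continuousAt.continuousWithinAt) (fun t _ ↦ (hg t).hasDerivWithinAt) ?_
    rw [interior_Icc]
    intro t ht
    exact mul_nonneg (by linarith [ht.1]) (sub_nonneg.2 (mul_cos_le_sin ht.1.le ht.2.le))
  have := hmono ⟨le_rfl, pi_pos.le⟩ ⟨hs₀, hsπ⟩ hs₀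
  simp only [g, sin_zero, cos_zero] at this
  linarith

theorem six_mul_mul_one_add_cos_le {u : ℝ} (hu₀ : 0 ≤ u) (huπ : u ≤ π) :
    6 * u * (1 + cos u) ≤ (12 - u ^ 2) * sin u := by
  obtain ⟨s, rfl⟩ : ∃ s, u = 2 * s := ⟨u / 2, by ring⟩
  have hcos : 0 ≤ cos s := cos_nonneg_of_mem_Icc ⟨by linarith [pi_pos], by linarith⟩
  have key := mul_le_mul_of_nonneg_right
    (mul_cos_le_one_sub_sq_div_three_mul_sin (s := s) (by linarith) (by linarith [pi_pos])) hcos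
  rw [sin_two_mul, cos_two_mul]
  nlinarith

noncomputable def T₂ (x : ℝ) : ℝ := -2 * π * (x - π + sin x) / (π - x) ^ 3

noncomputable def T₂' (x : ℝ) : ℝ :=
  -2 * π * ((1 + cos x) * (π - x) + 3 * (x - π + sin x)) / (π - x) ^ 4

noncomputable def T₂'' (x : ℝ) : ℝ :=
  2 * π * (6 * (π - x) * (1 - cos x) - (12 - (π - x) ^ 2) * sin x) / (π - x) ^ 5

theorem hasDerivAt_T₂ {x : ℝ} (hx : x ≠ π) : HasDerivAt T₂ (T₂' x) x := by
  have hu : π - x ≠ 0 := sub_ne_zero.2 hx.symm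
  have hnum := (((hasDerivAt_id x).sub_const π).add (hasDerivAt_sin x)).const_mul (-2 * π)
  have hden := ((hasDerivAt_id x).const_sub π).pow 3
  refine (hnum.div hden (pow_ne_zero 3 hu)).congr_deriv ?_
  simp only [T₂', id_eq, Pi.add_apply, Pi.pow_apply]
  field_simp
  ring

theorem hasDerivAt_T₂' {x : ℝ} (hx : x ≠ π) : HasDerivAt T₂' (T₂'' x) x := by
  have hu : π - x ≠ 0 := sub_ne_zero.2 hx.symm
  have hnum := ((((hasDerivAt_cos x).const_add 1).mul ((hasDerivAt_id x).const_sub π)).add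
    ((((hasDerivAt_id x).sub_const π).add (hasDerivAt_sin x)).const_mul 3)).const_mul (-2 * π)
  have hden := ((hasDerivAt_id x).const_sub π).pow 4
  refine (hnum.div hden (pow_ne_zero 4 hu)).congr_deriv ?_
  simp only [T₂'', id_eq, Pi.add_apply, Pi.mul_apply, Pi.pow_apply]
  field_simp
  ring

theorem deriv_deriv_T₂ {x : ℝ} (hx : x ≠ π) : deriv (deriv T₂) x = T₂'' x := by
  have : deriv T₂ =ᶠ[nhds x] T₂' :=
    (isOpen_ne.eventually_mem hx).mono fun y hy ↦ (hasDerivAt_T₂ hy).deriv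
  rw [this.deriv_eq, (hasDerivAt_T₂' hx).deriv]

theorem T₂''_nonpos {x : ℝ} (hx₀ : 0 ≤ x) (hxπ : x < π) : T₂'' x ≤ 0 := by
  have key := six_mul_mul_one_add_cos_le (u := π - x) (by linarith) (by linarith)
  rw [cos_pi_sub, sin_pi_sub] at key
  exact div_nonpos_of_nonpos_of_nonneg (mul_nonpos_of_nonneg_of_nonpos (by positivity)
    (by linarith)) (pow_nonneg (by linarith) 5)

theorem stmt_6 :
    ∀ x ∈ Set.Ioo (0 : ℝ) π,
      deriv (deriv (fun x : ℝ => -2 * π * (x - π + Real.sin x) / (π - x) ^ 3)) x ≤ 0 := by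
  intro x hx
  change deriv (deriv T₂) x ≤ 0
  rw [deriv_deriv_T₂ hx.2.ne]
  exact T₂''_nonpos hx.1.le hx.2
end

section
/- For all x in (0, π), tan(x/2) ≤ 2/(π − x) − (π − x)/6. -/
/-!
Put `t = (π - x) / 2`, so that `tan (x / 2) = cot t` and the right-hand side is `1 / t - t / 3`.
For `0 ≤ t ≤ √3` the inequality `t cos t ≤ (1 - t² / 3) sin t` follows from the Taylor bounds
`sin t ≥ t - t³ / 6` and `cos t ≤ 1 - t² / 2 + t⁴ / 24`, since the two sides then differ by `t⁵ / 72`.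
-/

open Real

namespace Real

theorem cos_le_one_sub_sq_div_two_add_pow_four_div {x : ℝ} (hx₀ : 0 ≤ x) (hx : x ^ 2 ≤ 24) :
    cos x ≤ 1 - x ^ 2 / 2 + x ^ 4 / 24 := by
  -- square the cubic lower bound for `sin (x / 2)` in `cos x = 1 - 2 sin² (x / 2)`
  have hsin : x / 2 - (x / 2) ^ 3 / 6 ≤ sin (x / 2) := sin_ge_sub_cube (by positivity)
  have hlow : 0 ≤ x / 2 - (x / 2) ^ 3 / 6 := by nlinarith
  have hsq := (pow_le_pow_left₀ hlow hsin 2).trans_eq (sin_sq_eq_half_sub (x / 2))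
  rw [show 2 * (x / 2) = x by ring] at hsq
  nlinarith [pow_nonneg hx₀ 6]

theorem mul_cos_le_one_sub_sq_div_three_mul_sin {t : ℝ} (ht₀ : 0 ≤ t) (ht : t ^ 2 ≤ 3) :
    t * cos t ≤ (1 - t ^ 2 / 3) * sin t := by
  have hcos := cos_le_one_sub_sq_div_two_add_pow_four_div ht₀ (by linarith)
  have hsin := sin_ge_sub_cube ht₀
  calc t * cos t ≤ t * (1 - t ^ 2 / 2 + t ^ 4 / 24) := mul_le_mul_of_nonneg_left hcos ht₀
    _ ≤ (1 - t ^ 2 / 3) * (t - t ^ 3 / 6) := by nlinarith [pow_nonneg ht₀ 5]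
    _ ≤ (1 - t ^ 2 / 3) * sin t := mul_le_mul_of_nonneg_left hsin (by linarith)

theorem cot_le_inv_sub_div_three {t : ℝ} (ht₀ : 0 < t) (ht : t ^ 2 ≤ 3) :
    cot t ≤ t⁻¹ - t / 3 := by
  have hsin : 0 < sin t := sin_pos_of_pos_of_lt_pi ht₀ (by nlinarith [pi_gt_three])
  rw [cot_eq_cos_div_sin, div_le_iff₀ hsin,
    show t⁻¹ - t / 3 = (1 - t ^ 2 / 3) / t by field_simp, div_mul_eq_mul_div, le_div_iff₀ ht₀,
    mul_comm]
  exact mul_cos_le_one_sub_sq_div_three_mul_sin ht₀.le ht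

end Real

theorem stmt_7 : ∀ x ∈ Set.Ioo (0 : ℝ) π,
    Real.tan (x / 2) ≤ 2 / (π - x) - (π - x) / 6 := by
  rintro x ⟨hx₀, hxπ⟩
  set t := (π - x) / 2 with ht_def
  have ht₀ : 0 < t := by linarith
  have ht : t ^ 2 ≤ 3 := by nlinarith [pi_lt_d2]
  have hlhs : tan (x / 2) = cot t := by
    rw [ht_def, show x / 2 = π / 2 - (π - x) / 2 by ring, tan_pi_div_two_sub, tan_inv_eq_cot]
  have hrhs : 2 / (π - x) - (π - x) / 6 = t⁻¹ - t / 3 := by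
    rw [ht_def]
    field_simp
    ring
  rw [hlhs, hrhs]
  exact cot_le_inv_sub_div_three ht₀ ht
end

section
/- For every integer j ≥ 1, (−1)^j · B_{2j+2} > 0, where B_n denotes the n-th Bernoulli number. -/
open Real

theorem stmt_8 : ∀ j : ℕ, 1 ≤ j → 0 < (-1 : ℚ) ^ j * bernoulli (2 * j + 2) := by
  intro j _
  have hk : j + 1 ≠ 0 := by omega
  have hs := hasSum_zeta_nat hk
  have hpos : 0 < (-1 : ℝ) ^ (j + 1 + 1) * (2 : ℝ) ^ (2 * (j + 1) - 1) * π ^ (2 * (j + 1)) *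
      (bernoulli (2 * (j + 1)) : ℝ) / ((2 * (j + 1)).factorial : ℝ) := by
    rw [← hs.tsum_eq]
    refine Summable.tsum_pos hs.summable (fun n => by positivity) 1 ?_
    norm_num
  have hX : (0 : ℝ) < (2 : ℝ) ^ (2 * (j + 1) - 1) * π ^ (2 * (j + 1)) / ((2 * (j + 1)).factorial : ℝ) := by
    have := Real.pi_pos
    positivity
  have h1 : 0 < (-1 : ℝ) ^ (j + 1 + 1) * (bernoulli (2 * (j + 1)) : ℝ) := by
    have heq : (-1 : ℝ) ^ (j + 1 + 1) * (2 : ℝ) ^ (2 * (j + 1) - 1) * π ^ (2 * (j + 1)) *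
        (bernoulli (2 * (j + 1)) : ℝ) / ((2 * (j + 1)).factorial : ℝ) =
        ((-1 : ℝ) ^ (j + 1 + 1) * (bernoulli (2 * (j + 1)) : ℝ)) *
        ((2 : ℝ) ^ (2 * (j + 1) - 1) * π ^ (2 * (j + 1)) / ((2 * (j + 1)).factorial : ℝ)) := by ring
    rw [heq] at hpos
    rcases mul_pos_iff.mp hpos with ⟨h, _⟩ | ⟨_, h⟩
    · exact h
    · linarith
  have h2 : (-1 : ℝ) ^ (j + 1 + 1) = (-1 : ℝ) ^ j := by
    rw [pow_succ, pow_succ]; ring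
  rw [h2] at h1
  have : 2 * (j + 1) = 2 * j + 2 := by ring
  rw [this] at h1
  exact_mod_cast h1
end

section
/- Let s > 2 and define h(s, θ̄₂) := π(s−2)(π(s−1) − θ̄₂(1+s))/(2θ̄₂ + (s+1)(π(s−2) − s·θ̄₂)). Then h(s, ·) is an increasing function of θ̄₂ on the interval [0, ((s−2)/s)π], and in particular h(s, θ̄₂) ≥ h(s, 0) = ((s−1)/(s+1))·π for all θ̄₂ in that interval. -/
open Real

theorem stmt_12 (s : ℝ) (hs : 2 < s) :
    MonotoneOn
      (fun t₂ : ℝ =>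
        π * (s - 2) * (π * (s - 1) - t₂ * (1 + s)) /
          (2 * t₂ + (s + 1) * (π * (s - 2) - s * t₂)))
      (Set.Icc 0 ((s - 2) / s * π)) ∧
    (∀ t₂ ∈ Set.Icc (0 : ℝ) ((s - 2) / s * π),
      (s - 1) / (s + 1) * π ≤
        π * (s - 2) * (π * (s - 1) - t₂ * (1 + s)) /
          (2 * t₂ + (s + 1) * (π * (s - 2) - s * t₂))) ∧
    π * (s - 2) * (π * (s - 1) - 0 * (1 + s)) /
        (2 * 0 + (s + 1) * (π * (s - 2) - s * 0)) = (s - 1) / (s + 1) * π := by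
  have hπ := Real.pi_pos
  have hs0 : (0:ℝ) < s := by linarith
  have hden : ∀ t ∈ Set.Icc (0:ℝ) ((s - 2) / s * π),
      0 < 2 * t + (s + 1) * (π * (s - 2) - s * t) := by
    rintro t ⟨h0, h1⟩
    rw [div_mul_eq_mul_div, le_div_iff₀ hs0] at h1
    have hc : (0:ℝ) ≤ (s + 2) * (s - 1) := by nlinarith
    have h2 := mul_le_mul_of_nonneg_left h1 hc
    nlinarith [hπ, mul_pos hπ (by linarith : (0:ℝ) < s - 2)]
  have hmono : MonotoneOn
      (fun t₂ : ℝ =>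
        π * (s - 2) * (π * (s - 1) - t₂ * (1 + s)) /
          (2 * t₂ + (s + 1) * (π * (s - 2) - s * t₂)))
      (Set.Icc 0 ((s - 2) / s * π)) := by
    rintro a ha b hb hab
    have hda := hden a ha
    have hdb := hden b hb
    simp only
    rw [div_le_div_iff₀ hda hdb]
    nlinarith [mul_nonneg (mul_nonneg (mul_pos hπ hπ).le (by linarith : (0:ℝ) ≤ s - 2))
      (sub_nonneg.2 hab)]
  have h0mem : (0:ℝ) ∈ Set.Icc (0:ℝ) ((s - 2) / s * π) :=
    ⟨le_refl 0, mul_nonneg (div_nonneg (by linarith) hs0.le) hπ.le⟩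
  have heq0 : π * (s - 2) * (π * (s - 1) - 0 * (1 + s)) /
      (2 * 0 + (s + 1) * (π * (s - 2) - s * 0)) = (s - 1) / (s + 1) * π := by
    have h1 : (s:ℝ) + 1 ≠ 0 := by linarith
    have h2 : (s:ℝ) - 2 ≠ 0 := by linarith
    field_simp
    ring
  refine ⟨hmono, ?_, heq0⟩
  intro t ht
  have := hmono h0mem ht ht.1
  simp only at this
  calc (s - 1) / (s + 1) * π
      = π * (s - 2) * (π * (s - 1) - 0 * (1 + s)) /
        (2 * 0 + (s + 1) * (π * (s - 2) - s * 0)) := heq0.symm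
    _ ≤ _ := this
end

section
/- Fix λ₁, λ₂ ∈ ℝ and let Φ(z) := −1/(2 sin²(z/2)) − λ₁/z² + λ₂ for z ∈ (0, π). Then Φ has at most two zeros in (0, π). -/
/-!
Substituting `s = z²` and using `2 sin²(z/2) = 1 - cos z`, the zeros of `Φ` in `(0, π)` correspond
to the zeros in `(0, π²)` of `G s = s / (1 - cos √s) + λ₁ - λ₂ s`, and a strictly convex function
has at most two zeros. `G` is strictly convex because `G' s = W √s - λ₂` with
`W z = (2 (1 - cos z) - z sin z) / (2 (1 - cos z)²)` increasing on `(0, π)`: the numerator of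
`W' z = (z (2 + cos z) - 3 sin z) / (2 (1 - cos z)²)` vanishes at `0`, as do its derivatives
`2 (1 - cos z) - z sin z` and `sin z - z cos z`, while the next one, `z sin z`, is positive.
-/

open Real Set

theorem StrictConvexOn.encard_setOf_eq_le_two {S : Set ℝ} {f : ℝ → ℝ}
    (hf : StrictConvexOn ℝ S f) (c : ℝ) : {x ∈ S | f x = c}.encard ≤ 2 := by
  by_contra! h
  obtain ⟨t, hts, ht⟩ := exists_subset_encard_eq (Order.add_one_le_of_lt h)
  have htf : t.Finite := finite_of_encard_eq_coe ht
  have hcard : htf.toFinset.card = 3 := by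
    rw [← Nat.cast_inj (R := ℕ∞), ← htf.encard_eq_coe_toFinset_card, ht]; rfl
  set e := htf.toFinset.orderEmbOfFin hcard
  have he (i : Fin 3) : e i ∈ {x ∈ S | f x = c} :=
    hts (htf.mem_toFinset.1 (Finset.orderEmbOfFin_mem _ _ i))
  have h01 : e 0 < e 1 := e.strictMono (by decide)
  have h12 : e 1 < e 2 := e.strictMono (by decide)
  have := hf.lt_on_openSegment (he 0).1 (he 2).1 (h01.trans h12).ne
    (by rw [openSegment_eq_Ioo (h01.trans h12)]; exact ⟨h01, h12⟩)
  simp [(he _).2] at this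

theorem pos_of_hasDerivAt_pos {f f' : ℝ → ℝ} {a b x : ℝ} (hf : ContinuousOn f (Icc a b))
    (hf' : ∀ y ∈ Ioo a b, HasDerivAt f (f' y) y) (hpos : ∀ y ∈ Ioo a b, 0 < f' y)
    (ha : f a = 0) (hx : x ∈ Ioo a b) : 0 < f x := by
  have hmono : StrictMonoOn f (Icc a b) :=
    strictMonoOn_of_hasDerivWithinAt_pos (convex_Icc a b) hf
      (fun y hy => (hf' y (by simpa using hy)).hasDerivWithinAt)
      (fun y hy => hpos y (by simpa using hy))
  simpa [ha] using hmono (left_mem_Icc.2 (hx.1.trans hx.2).le) (Ioo_subset_Icc_self hx) hx.1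

theorem two_mul_sin_sq_half (x : ℝ) : 2 * sin (x / 2) ^ 2 = 1 - cos x := by
  rw [sin_sq_eq_half_sub, mul_div_cancel₀ _ two_ne_zero]; ring

theorem cos_lt_one_of_pos_of_lt_two_mul_pi {x : ℝ} (h0 : 0 < x) (h1 : x < 2 * π) :
    cos x < 1 := by
  have := sin_pos_of_pos_of_lt_pi (x := x / 2) (by linarith) (by linarith)
  have := two_mul_sin_sq_half x
  nlinarith

theorem sin_sub_mul_cos_pos {x : ℝ} (hx : x ∈ Ioo 0 π) : 0 < sin x - x * cos x := by
  refine pos_of_hasDerivAt_pos (f := fun y => sin y - y * cos y) (f' := fun y => y * sin y)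
    (by fun_prop) (fun y _ => ?_) (fun y hy => mul_pos hy.1 (sin_pos_of_pos_of_lt_pi hy.1 hy.2))
    (by simp) hx
  exact ((hasDerivAt_sin y).sub ((hasDerivAt_id' y).mul (hasDerivAt_cos y))).congr_deriv
    (by ring)

theorem hasDerivAt_two_mul_one_sub_cos_sub_mul_sin (x : ℝ) :
    HasDerivAt (fun x => 2 * (1 - cos x) - x * sin x) (sin x - x * cos x) x :=
  ((((hasDerivAt_cos x).const_sub 1).const_mul 2).sub
    ((hasDerivAt_id' x).mul (hasDerivAt_sin x))).congr_deriv (by ring)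

theorem two_mul_one_sub_cos_sub_mul_sin_pos {x : ℝ} (hx : x ∈ Ioo 0 π) :
    0 < 2 * (1 - cos x) - x * sin x :=
  pos_of_hasDerivAt_pos (f := fun y => 2 * (1 - cos y) - y * sin y) (by fun_prop) (fun y _ => hasDerivAt_two_mul_one_sub_cos_sub_mul_sin y)
    (fun _ hy => sin_sub_mul_cos_pos hy) (by simp) hx

theorem mul_two_add_cos_sub_three_mul_sin_pos {x : ℝ} (hx : x ∈ Ioo 0 π) :
    0 < x * (2 + cos x) - 3 * sin x := by
  refine pos_of_hasDerivAt_pos (f := fun y => y * (2 + cos y) - 3 * sin y)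
    (f' := fun y => 2 * (1 - cos y) - y * sin y) (by fun_prop)
    (fun y _ => ?_) (fun _ hy => two_mul_one_sub_cos_sub_mul_sin_pos hy) (by simp) hx
  exact (((hasDerivAt_id' y).mul ((hasDerivAt_cos y).const_add 2)).sub
    ((hasDerivAt_sin y).const_mul 3)).congr_deriv (by ring)

theorem hasDerivAt_two_mul_one_sub_cos_sub_mul_sin_div {x : ℝ} (hc : cos x ≠ 1) :
    HasDerivAt (fun x => (2 * (1 - cos x) - x * sin x) / (2 * (1 - cos x) ^ 2))
      ((x * (2 + cos x) - 3 * sin x) / (2 * (1 - cos x) ^ 2)) x := by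
  have hc' : 1 - cos x ≠ 0 := sub_ne_zero.2 hc.symm
  have hden : HasDerivAt (fun x => 2 * (1 - cos x) ^ 2) (4 * (1 - cos x) * sin x) x :=
    ((((hasDerivAt_cos x).const_sub 1).pow 2).const_mul 2).congr_deriv (by ring)
  refine ((hasDerivAt_two_mul_one_sub_cos_sub_mul_sin x).div hden
    (by positivity)).congr_deriv ?_
  field_simp
  linear_combination 4 * x * sin_sq_add_cos_sq x

theorem strictMonoOn_two_mul_one_sub_cos_sub_mul_sin_div :
    StrictMonoOn (fun x => (2 * (1 - cos x) - x * sin x) / (2 * (1 - cos x) ^ 2)) (Ioo 0 π) := by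
  have hc {x : ℝ} (hx : x ∈ Ioo 0 π) : cos x < 1 :=
    cos_lt_one_of_pos_of_lt_two_mul_pi hx.1 (by linarith [hx.2, pi_pos])
  refine strictMonoOn_of_hasDerivWithinAt_pos (convex_Ioo 0 π)
    (fun x hx => (hasDerivAt_two_mul_one_sub_cos_sub_mul_sin_div
      (hc hx).ne).continuousAt.continuousWithinAt)
    (fun x hx => (hasDerivAt_two_mul_one_sub_cos_sub_mul_sin_div
      (hc (interior_subset hx)).ne).hasDerivWithinAt) fun x hx => ?_
  rw [interior_Ioo] at hx
  have := mul_two_add_cos_sub_three_mul_sin_pos hx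
  have := sub_pos.2 (hc hx)
  positivity

theorem hasDerivAt_div_one_sub_cos_sqrt {s : ℝ} (hs : 0 < s) (hc : cos √s ≠ 1) :
    HasDerivAt (fun s => s / (1 - cos √s))
      ((2 * (1 - cos √s) - √s * sin √s) / (2 * (1 - cos √s) ^ 2)) s := by
  have hc' : 1 - cos √s ≠ 0 := sub_ne_zero.2 hc.symm
  have hz : √s ≠ 0 := (sqrt_pos.2 hs).ne'
  refine ((hasDerivAt_id' s).div ((hasDerivAt_sqrt hs.ne').cos.const_sub 1) hc').congr_deriv ?_
  field_simp
  linear_combination sin √s * sq_sqrt hs.le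

theorem strictConvexOn_div_one_sub_cos_sqrt :
    StrictConvexOn ℝ (Ioo 0 (π ^ 2)) (fun s => s / (1 - cos √s)) := by
  have hsqrt {s : ℝ} (hs : s ∈ Ioo 0 (π ^ 2)) : √s ∈ Ioo 0 π :=
    ⟨sqrt_pos.2 hs.1, (sqrt_lt' pi_pos).2 hs.2⟩
  have hderiv {s : ℝ} (hs : s ∈ Ioo 0 (π ^ 2)) := hasDerivAt_div_one_sub_cos_sqrt hs.1
    (cos_lt_one_of_pos_of_lt_two_mul_pi (hsqrt hs).1 (by linarith [(hsqrt hs).2, pi_pos])).ne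
  refine StrictMonoOn.strictConvexOn_of_deriv (convex_Ioo _ _)
    (fun s hs => (hderiv hs).continuousAt.continuousWithinAt) ?_
  rw [interior_Ioo]
  intro s hs t ht hst
  rw [(hderiv hs).deriv, (hderiv ht).deriv]
  exact strictMonoOn_two_mul_one_sub_cos_sub_mul_sin_div (hsqrt hs) (hsqrt ht)
    (sqrt_lt_sqrt hs.1.le hst)

theorem stmt_13 (l₁ l₂ : ℝ) :
    {z ∈ Set.Ioo (0 : ℝ) π |
      -1 / (2 * Real.sin (z / 2) ^ 2) - l₁ / z ^ 2 + l₂ = 0}.encard ≤ 2 := by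
  set G : ℝ → ℝ := fun s => s / (1 - cos √s) + (l₁ - l₂ * s)
  have hG : StrictConvexOn ℝ (Ioo 0 (π ^ 2)) G :=
    strictConvexOn_div_one_sub_cos_sqrt.add_convexOn
      (((LinearMap.mulLeft ℝ (-l₂)).convexOn (convex_Ioo _ _)).add_const l₁ |>.congr
        fun s _ => by simp only [Pi.add_apply, LinearMap.mulLeft_apply]; ring)
  have hzeros : (· ^ 2) '' {z ∈ Ioo 0 π | -1 / (2 * sin (z / 2) ^ 2) - l₁ / z ^ 2 + l₂ = 0} ⊆
      {s ∈ Ioo 0 (π ^ 2) | G s = 0} := by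
    rintro _ ⟨z, ⟨hz, hΦ⟩, rfl⟩
    have hz0 := hz.1.ne'
    have hc := sub_pos.2 (cos_lt_one_of_pos_of_lt_two_mul_pi hz.1 (by linarith [hz.2, pi_pos]))
    refine ⟨⟨pow_pos hz.1 2, pow_lt_pow_left₀ hz.2 hz.1.le two_ne_zero⟩, ?_⟩
    rw [two_mul_sin_sq_half] at hΦ
    simp only [G, sqrt_sq hz.1.le]
    field_simp at hΦ ⊢
    linarith
  calc _ = _ := ((pow_left_strictMonoOn₀ two_ne_zero).injOn.mono
        fun z hz => hz.1.1.le).encard_image.symm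
    _ ≤ _ := encard_mono hzeros
    _ ≤ 2 := hG.encard_setOf_eq_le_two 0
end
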